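/- arXiv:2306.13718 — 4 statements merged into one kernel-verified Lean document; each statement's English description precedes it below -/
import Mathlib

section
/- Let p be a prime, α, β ∈ F_{p^n}, γ ∈ F_{p^n} with γ ≠ 0, and define the map 𝓛 : F_{p^n} × F_{p^n} → F_{p^n} × F_{p^n} by 𝓛(x,y) = (x + γ·Tr(αx + βy), y), where Tr is the absolute trace to F_p and γ·Tr(αx+βy) means scalar multiplication of γ by the element Tr(αx+βy) of F_p. Then 𝓛 is an F_p-linear bijection of F_{p^n} × F_{p^n} if and only if Tr(αγ) ≠ -1. -/
/-!
The map is the transvection `q ↦ q + φ q • v` of `F_{p^n} × F_{p^n}` with `v = (γ, 0)` and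
`φ (x, y) = Tr (α x + β y)`, so `φ v = Tr (α γ)`. Over a division ring such a map is invertible
as soon as `1 + φ v ≠ 0` (the inverse is the transvection of `-(1 + φ v)⁻¹ • v`), while for
`φ v = -1` it sends the nonzero vector `v` to `0`.
-/

namespace LinearMap.transvection

open Module

variable {K V : Type*} [DivisionRing K] [AddCommGroup V] [Module K V]

theorem bijective_iff {f : Dual K V} {v : V} :
    Function.Bijective (transvection f v) ↔ f v ≠ -1 := by
  constructor
  · intro hbij hfv
    have hv : v ≠ 0 := by
      rintro rfl
      simp at hfv
    have hv_zero : transvection f v v = transvection f v 0 := by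
      simp [apply, hfv]
    exact hv (hbij.injective hv_zero)
  · intro hfv
    have hunit : IsUnit (1 + f v) :=
      isUnit_iff_ne_zero.mpr (add_eq_zero_iff_eq_neg'.not.mpr hfv)
    exact (LinearEquiv.dilatransvection hunit).bijective

end LinearMap.transvection

theorem twist_map_bijective_iff_general
    (p n : ℕ) [Fact p.Prime]
    (α β γ : GaloisField p n) :
    (IsLinearMap (ZMod p)
        (fun q : GaloisField p n × GaloisField p n =>
          (q.1 + Algebra.trace (ZMod p) (GaloisField p n) (α * q.1 + β * q.2) • γ, q.2))
      ∧ Function.Bijective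
        (fun q : GaloisField p n × GaloisField p n =>
          (q.1 + Algebra.trace (ZMod p) (GaloisField p n) (α * q.1 + β * q.2) • γ, q.2)))
      ↔ Algebra.trace (ZMod p) (GaloisField p n) (α * γ) ≠ -1 := by
  let φ : Module.Dual (ZMod p) (GaloisField p n × GaloisField p n) :=
    (Algebra.trace (ZMod p) (GaloisField p n)).comp
      ((LinearMap.mulLeft (ZMod p) α).coprod (LinearMap.mulLeft (ZMod p) β))
  have htwist : (fun q : GaloisField p n × GaloisField p n =>
      (q.1 + Algebra.trace (ZMod p) (GaloisField p n) (α * q.1 + β * q.2) • γ, q.2))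
        = LinearMap.transvection φ (γ, 0) := by
    ext q <;> simp [φ, LinearMap.transvection.apply]
  have hφ : φ (γ, 0) = Algebra.trace (ZMod p) (GaloisField p n) (α * γ) := by
    simp [φ]
  rw [htwist, ← hφ, ← LinearMap.transvection.bijective_iff]
  exact and_iff_right (LinearMap.transvection φ (γ, 0)).isLinear

/-- The map `𝓛(x,y) = (x + γ·Tr(αx + βy), y)` is an `F_p`-linear bijection iff
`Tr(αγ) ≠ -1`. -/
theorem twist_map_bijective_iff
    (p n : ℕ) [Fact p.Prime]
    (α β γ : GaloisField p n) (hγ : γ ≠ 0) :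
    (IsLinearMap (ZMod p)
        (fun q : GaloisField p n × GaloisField p n =>
          (q.1 + Algebra.trace (ZMod p) (GaloisField p n) (α * q.1 + β * q.2) • γ, q.2))
      ∧ Function.Bijective
        (fun q : GaloisField p n × GaloisField p n =>
          (q.1 + Algebra.trace (ZMod p) (GaloisField p n) (α * q.1 + β * q.2) • γ, q.2)))
      ↔ Algebra.trace (ZMod p) (GaloisField p n) (α * γ) ≠ -1 :=
  twist_map_bijective_iff_general p n α β γ
end

section
/- Let p be a prime and F : F_{p^n} → F_{p^n} a function such that γ ∈ F_{p^n}, γ ≠ 0, is a 0-linear structure of Tr(βF) for some β ≠ 0, i.e., Tr(β(F(x+γ) - F(x))) = 0 for all x ∈ F_{p^n}. Let α ∈ F_{p^n} satisfy Tr(αγ) = -2, and define H(x) = x + γ·Tr(αx + βF(x)). Then H is an involution: H(H(x)) = x for all x ∈ F_{p^n}. -/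
/-! Along the line `x + 𝔽ₚ γ` the map `y ↦ Tr(βF(y))` is constant (a period `γ` is a period
`t • γ` for every `t ∈ 𝔽ₚ`), while `y ↦ Tr(αy)` drops by `2t` at `x + t • γ`. Hence if
`H(x) = x + t • γ` with `t = Tr(αx + βF(x))`, the second application of `H` moves by
`(t - 2t) • γ = -t • γ` and returns to `x`. -/

open Function

theorem Function.Periodic.zmod_smul {p : ℕ} {V X : Type*} [AddCommGroup V] [Module (ZMod p) V]
    {f : V → X} {c : V} (h : Periodic f c) (t : ZMod p) : Periodic f (t • c) := by
  rw [← ZMod.intCast_zmod_cast t, Int.cast_smul_eq_zsmul]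
  exact h.zsmul _

theorem involutive_add_smul_of_map_add_smul {R V : Type*} [Ring R] [AddCommGroup V] [Module R V]
    {f : V → R} {γ : V} (hf : ∀ x (t : R), f (x + t • γ) = f x - 2 * t) :
    Involutive fun x => x + f x • γ := by
  intro x
  simp only [hf, add_assoc, ← add_smul]
  rw [show f x + (f x - 2 * f x) = 0 by noncomm_ring, zero_smul, add_zero]

theorem trace_add_smul_of_periodic {p : ℕ} {A : Type*} [CommRing A] [Algebra (ZMod p) A]
    {F : A → A} {α β γ : A} (hF : Periodic (fun y => Algebra.trace (ZMod p) A (β * F y)) γ)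
    (hα : Algebra.trace (ZMod p) A (α * γ) = -2) (x : A) (t : ZMod p) :
    Algebra.trace (ZMod p) A (α * (x + t • γ) + β * F (x + t • γ))
      = Algebra.trace (ZMod p) A (α * x + β * F x) - 2 * t := by
  have hperiod :
      Algebra.trace (ZMod p) A (β * F (x + t • γ)) = Algebra.trace (ZMod p) A (β * F x) :=
    hF.zmod_smul t x
  simp only [map_add, mul_add, mul_smul_comm, map_smul, hα, hperiod, smul_eq_mul]
  ring

theorem twist_involution_general
    (p n : ℕ) [Fact p.Prime]
    (F : GaloisField p n → GaloisField p n)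
    (α β γ : GaloisField p n)
    (hls : ∀ x, Algebra.trace (ZMod p) (GaloisField p n) (β * (F (x + γ) - F x)) = 0)
    (hα : Algebra.trace (ZMod p) (GaloisField p n) (α * γ) = -2) :
    ∀ x : GaloisField p n,
      (fun y => y + Algebra.trace (ZMod p) (GaloisField p n) (α * y + β * F y) • γ)
        ((fun y => y + Algebra.trace (ZMod p) (GaloisField p n) (α * y + β * F y) • γ) x)
        = x := by
  have hF : Periodic (fun y => Algebra.trace (ZMod p) (GaloisField p n) (β * F y)) γ := fun x =>
    sub_eq_zero.mp (by rw [← map_sub, ← mul_sub, hls])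
  exact involutive_add_smul_of_map_add_smul (trace_add_smul_of_periodic hF hα)

/-- If `γ ≠ 0` is a `0`-linear structure of `Tr(βF)` and `Tr(αγ) = -2`, then
`H(x) = x + γ·Tr(αx + βF(x))` is an involution. -/
theorem twist_involution
    (p n : ℕ) [Fact p.Prime]
    (F : GaloisField p n → GaloisField p n)
    (α β γ : GaloisField p n) (hγ : γ ≠ 0) (hβ : β ≠ 0)
    (hls : ∀ x, Algebra.trace (ZMod p) (GaloisField p n) (β * (F (x + γ) - F x)) = 0)
    (hα : Algebra.trace (ZMod p) (GaloisField p n) (α * γ) = -2) :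
    ∀ x : GaloisField p n,
      (fun y => y + Algebra.trace (ZMod p) (GaloisField p n) (α * y + β * F y) • γ)
        ((fun y => y + Algebra.trace (ZMod p) (GaloisField p n) (α * y + β * F y) • γ) x)
        = x :=
  twist_involution_general p n F α β γ hls hα
end

section
/- Let F : F_{p^n} → F_{p^n} be a quadratic function written as F(x) = F_DO(x) + F_ℓ(x) + F(0), where F_DO(x) = Σ_{i≤j} a_{i,j} x^{p^i + p^j} is the Dembowski–Ostrom part and F_ℓ is linear. Let H(x) = x + γ·ε(x) with ε(x) = Tr(αx + βF(x)) ∈ F_p and α, β, γ ∈ F_{p^n}. Then for all x, F(H(x)) = F(x) + ε(x)·D_γF(x) + F_DO(γ)·(ε(x)² - ε(x)), where D_γF(x) = F(x+γ) - F(x). In particular if p = 2 the last term vanishes since ε² = ε in F_2. -/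
/-!
The coefficient `c = ε(x)` lies in the prime field, so it is fixed by every power of Frobenius
and `(x + c y) ^ (p ^ i) = x ^ (p ^ i) + c y ^ (p ^ i)`. Multiplying two such factors shows that
each Dembowski–Ostrom monomial `m = X ^ (p ^ i + p ^ j)` satisfies
`m (x + c y) = m x + c (m (x + y) - m x) + (c ^ 2 - c) m y`. This identity is linear in `m`, and
additive maps and constants satisfy it without the last term, so it passes to `F`.
-/

open Finset

def dembowskiOstrom {R : Type*} [CommRing R] (p : ℕ) (s : Finset ℕ) (a : ℕ → ℕ → R) (x : R) :
    R :=
  ∑ i ∈ s, ∑ j ∈ s, if i ≤ j then a i j * x ^ (p ^ i + p ^ j) else 0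

theorem pow_pow_eq_self_of_pow_eq_self {M : Type*} [Monoid M] {e : M} {p : ℕ} (he : e ^ p = e)
    (k : ℕ) : e ^ p ^ k = e := by
  induction k with
  | zero => exact pow_one e
  | succ k ih => rw [pow_succ, pow_mul, ih, he]

section ExpChar

variable {R : Type*} [CommRing R] {p : ℕ} [ExpChar R p] {e : R}

theorem add_mul_pow_expChar_pow_add (he : e ^ p = e) (i j : ℕ) (x y : R) :
    (x + e * y) ^ (p ^ i + p ^ j) = x ^ (p ^ i + p ^ j)
      + e * ((x + y) ^ (p ^ i + p ^ j) - x ^ (p ^ i + p ^ j))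
      + (e ^ 2 - e) * y ^ (p ^ i + p ^ j) := by
  simp only [pow_add, add_pow_expChar_pow, mul_pow, pow_pow_eq_self_of_pow_eq_self he]
  ring

theorem dembowskiOstrom_add_mul (he : e ^ p = e) (s : Finset ℕ) (a : ℕ → ℕ → R) (x y : R) :
    dembowskiOstrom p s a (x + e * y) = dembowskiOstrom p s a x
      + e * (dembowskiOstrom p s a (x + y) - dembowskiOstrom p s a x)
      + (e ^ 2 - e) * dembowskiOstrom p s a y := by
  simp only [dembowskiOstrom, ← sum_sub_distrib, mul_sum, ← sum_add_distrib]
  refine sum_congr rfl fun i _ => sum_congr rfl fun j _ => ?_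
  split_ifs
  · rw [add_mul_pow_expChar_pow_add he]
    ring
  · ring

end ExpChar

section PrimeField

variable {K : Type*} [CommRing K] {p : ℕ} [Fact p.Prime] [Algebra (ZMod p) K] [ExpChar K p]

theorem dembowskiOstrom_add_smul (s : Finset ℕ) (a : ℕ → ℕ → K) (c : ZMod p) (x y : K) :
    dembowskiOstrom p s a (x + c • y) = dembowskiOstrom p s a x
      + c • (dembowskiOstrom p s a (x + y) - dembowskiOstrom p s a x)
      + (c ^ 2 - c) • dembowskiOstrom p s a y := by
  have hc : algebraMap (ZMod p) K c ^ p = algebraMap (ZMod p) K c := by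
    rw [← map_pow, ZMod.pow_card]
  simp only [Algebra.smul_def, map_sub, map_pow]
  exact dembowskiOstrom_add_mul hc s a x y

theorem quadratic_add_smul {F Fl : K → K} {s : Finset ℕ} {a : ℕ → ℕ → K}
    (hFl : IsLinearMap (ZMod p) Fl) (hF : ∀ x, F x = dembowskiOstrom p s a x + Fl x + F 0)
    (c : ZMod p) (x y : K) :
    F (x + c • y) = F x + c • (F (x + y) - F x) + (c ^ 2 - c) • dembowskiOstrom p s a y := by
  rw [hF (x + c • y), hF x, hF (x + y), dembowskiOstrom_add_smul, hFl.map_add, hFl.map_add,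
    hFl.map_smul]
  module

end PrimeField

/-- For a quadratic function `F = F_DO + F_ℓ + F(0)` with `F_DO` a Dembowski–Ostrom
polynomial and `F_ℓ` linear, and `H(x) = x + ε(x)·γ` with
`ε(x) = Tr(αx + βF(x))`, one has
`F(H(x)) = F(x) + ε(x)·D_γF(x) + F_DO(γ)·(ε(x)² - ε(x))`. -/
theorem quadratic_compose_twist
    (p n : ℕ) [Fact p.Prime]
    (F FDO Fl : GaloisField p n → GaloisField p n)
    (a : ℕ → ℕ → GaloisField p n)
    (hDO : ∀ x, FDO x = ∑ i ∈ Finset.range n, ∑ j ∈ Finset.range n,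
      if i ≤ j then a i j * x ^ (p ^ i + p ^ j) else 0)
    (hFl : IsLinearMap (ZMod p) Fl)
    (hF : ∀ x, F x = FDO x + Fl x + F 0)
    (α β γ : GaloisField p n) :
    ∀ x : GaloisField p n,
      F (x + Algebra.trace (ZMod p) (GaloisField p n) (α * x + β * F x) • γ)
        = F x
          + Algebra.trace (ZMod p) (GaloisField p n) (α * x + β * F x) • (F (x + γ) - F x)
          + ((Algebra.trace (ZMod p) (GaloisField p n) (α * x + β * F x)) ^ 2
              - Algebra.trace (ZMod p) (GaloisField p n) (α * x + β * F x)) • FDO γ := by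
  obtain rfl : FDO = dembowskiOstrom p (range n) a := funext hDO
  exact fun x => quadratic_add_smul hFl hF _ x γ
end

section
/- Let F : F_{p^n} → F_{p^n} be a quadratic function, β, γ ∈ F_{p^n}, and define F₃(x) = Tr(βF(x))·D_γF(x), where D_γF(x) = F(x+γ) - F(x) and Tr(βF(x)) ∈ F_p acts by scalar multiplication. Then for any γ₁, γ₂, γ₃ ∈ F_{p^n}, the third-order derivative D_{γ₃}D_{γ₂}D_{γ₁}F₃(x) is constant in x and equals Tr(βL_{γ₂}(γ₃))·L_γ(γ₁) + Tr(βL_{γ₁}(γ₃))·L_γ(γ₂) + Tr(βL_{γ₁}(γ₂))·L_γ(γ₃), where L_δ(x) = F(x+δ) - F(x) - F(δ) + F(0). -/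
/-!
Write `q y = Tr(β F(y))` and `ℓ = D_γ F`. Composing with the additive map `Tr(β ·)` preserves
algebraic degree, so `q` is quadratic with polar form `Tr(β L)`, while `ℓ` is affine. Expanding
`q(x + a) = q(x) + (q(a) - q(0)) + L^q_a(x)` and `ℓ(x + a) = ℓ(x) + (ℓ(a) - ℓ(0))` inside the
eight-term alternating sum of a third difference, everything cancels except the products of the
polar form at two of the `γᵢ` with the linear part of `ℓ` at the third.
-/

/-- Discrete derivative. -/
def DD {V W : Type*} [AddCommGroup V] [AddCommGroup W] (δ : V) (G : V → W) : V → W :=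
  fun x => G (x + δ) - G x

/-- A function has algebraic degree at most `d` iff all `(d+1)`-fold discrete
derivatives vanish identically. -/
def degLE {V W : Type*} [AddCommGroup V] [AddCommGroup W] : (V → W) → ℕ → Prop
  | F, 0 => ∀ γ x, F (x + γ) - F x = 0
  | F, (d + 1) => ∀ γ, degLE (fun x => F (x + γ) - F x) d

section Polar

variable {V W : Type*} [AddCommGroup V] [AddCommGroup W]

/-- The paper's `L_a(b)`. -/
def polar (f : V → W) (a b : V) : W :=
  f (a + b) - f a - (f b - f 0)

theorem map_add_eq_add_polar (f : V → W) (y a : V) :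
    f (y + a) = f y + (f a - f 0) + polar f y a := by
  unfold polar
  abel

theorem polar_comp {W' : Type*} [AddCommGroup W'] (φ : W →+ W') (f : V → W) (a b : V) :
    polar (φ ∘ f) a b = φ (polar f a b) := by
  simp only [polar, Function.comp_apply, map_sub]

theorem degLE.polar_eq_zero {f : V → W} (h : degLE f 1) (a b : V) : polar f a b = 0 := by
  simpa only [degLE, zero_add, polar] using h b a 0

theorem degLE.map_add {f : V → W} (h : degLE f 1) (y a : V) : f (y + a) = f y + (f a - f 0) := by
  rw [map_add_eq_add_polar f y a, h.polar_eq_zero, add_zero]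

theorem degLE.polar_add_left {f : V → W} (h : degLE f 2) (y c a : V) :
    polar f (y + c) a = polar f y a + polar f c a := by
  have hDa := (h a).map_add y c
  simp only [zero_add] at hDa
  unfold polar
  rw [hDa]
  abel

theorem degLE.comp_addMonoidHom {W' : Type*} [AddCommGroup W'] (φ : W →+ W') :
    ∀ {f : V → W} {d : ℕ}, degLE f d → degLE (φ ∘ f) d
  | f, 0, h => fun γ x => by simp only [Function.comp_apply, ← map_sub, h γ x, map_zero]
  | f, d + 1, h => fun γ => by
      simpa only [Function.comp_def, map_sub] using degLE.comp_addMonoidHom φ (h γ)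

end Polar

theorem DD_DD_DD_smul_of_degLE {V R M : Type*} [AddCommGroup V] [CommRing R] [AddCommGroup M]
    [Module R M] {q : V → R} {ℓ : V → M} (hq : degLE q 2) (hℓ : degLE ℓ 1)
    (γ₁ γ₂ γ₃ x : V) :
    DD γ₃ (DD γ₂ (DD γ₁ fun y => q y • ℓ y)) x
      = polar q γ₃ γ₂ • (ℓ γ₁ - ℓ 0) + polar q γ₃ γ₁ • (ℓ γ₂ - ℓ 0)
        + polar q γ₂ γ₁ • (ℓ γ₃ - ℓ 0) := by
  simp only [DD, map_add_eq_add_polar q, hq.polar_add_left, hℓ.map_add]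
  module

/-- Third derivative of `F₃(x) = Tr(βF(x))·D_γF(x)` for quadratic `F`. -/
theorem third_derivative_of_F3
    (p n : ℕ) [Fact p.Prime]
    (F : GaloisField p n → GaloisField p n)
    (hquad : degLE F 2 ∧ ¬ degLE F 1)
    (β γ : GaloisField p n) :
    ∀ γ₁ γ₂ γ₃ x : GaloisField p n,
      DD γ₃ (DD γ₂ (DD γ₁
        (fun y => Algebra.trace (ZMod p) (GaloisField p n) (β * F y) • (F (y + γ) - F y)))) x
      = Algebra.trace (ZMod p) (GaloisField p n) (β * (F (γ₃ + γ₂) - F γ₃ - (F γ₂ - F 0)))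
          • (F (γ₁ + γ) - F γ₁ - (F γ - F 0))
        + Algebra.trace (ZMod p) (GaloisField p n) (β * (F (γ₃ + γ₁) - F γ₃ - (F γ₁ - F 0)))
          • (F (γ₂ + γ) - F γ₂ - (F γ - F 0))
        + Algebra.trace (ZMod p) (GaloisField p n) (β * (F (γ₂ + γ₁) - F γ₂ - (F γ₁ - F 0)))
          • (F (γ₃ + γ) - F γ₃ - (F γ - F 0)) := by
  intro γ₁ γ₂ γ₃ x
  let trβ : GaloisField p n →+ ZMod p :=
    (Algebra.trace (ZMod p) (GaloisField p n)).toAddMonoidHom.comp (AddMonoidHom.mulLeft β)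
  have hq : degLE (trβ ∘ F) 2 := hquad.1.comp_addMonoidHom trβ
  have hℓ : degLE (DD γ F) 1 := hquad.1 γ
  have h := DD_DD_DD_smul_of_degLE hq hℓ γ₁ γ₂ γ₃ x
  simp only [polar_comp, DD, zero_add] at h
  exact h
end
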